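/- Obstruction at n = 4: the number of σ in V_4 with τ_4(σ) = 1 is 3, the number with τ_4(σ) = 2 is 4, and the number with τ_4(σ) = 3 is 0; in particular, these counts do not equal the Katugampola coefficients (3, 12, 4) for row n = 4. -/

import Mathlib

inductive RB : Type
  | R : RB
  | B : RB
deriving DecidableEq

/-- σ contains at least one B. -/
def hasB {n : ℕ} (σ : Fin n → RB) : Prop := ∃ i, σ i = RB.B

/-- The set of (0-based) positions where σ takes value B. -/
def Bpos {n : ℕ} (σ : Fin n → RB) : Set ℕ := {i | ∃ h : i < n, σ ⟨i, h⟩ = RB.B}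

noncomputable def firstB {n : ℕ} (σ : Fin n → RB) : ℕ := sInf (Bpos σ)

noncomputable def lastB {n : ℕ} (σ : Fin n → RB) : ℕ := sSup (Bpos σ)

noncomputable def gap {n : ℕ} (σ : Fin n → RB) : ℕ := lastB σ - firstB σ

/-- σ is valid: contains at least one B and gap ≤ 1. -/
def valid {n : ℕ} (σ : Fin n → RB) : Prop := hasB σ ∧ gap σ ≤ 1

/-- Parity-dependent type function. -/
noncomputable def tau {n : ℕ} (σ : Fin n → RB) : ℕ :=
  if Even n then 2 - gap σ else gap σ + 1

/-!
A sequence in `V_4` has either a single `B` (gap 0, four choices, type 2) or two adjacent `B`s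
(gap 1, three choices, type 1), so no sequence has type 3. Once the `sInf`/`sSup` defining
`firstB`/`lastB` are replaced by `min'`/`max'` of the finite set of `B`-positions, the counts
are decidable and are computed directly.
-/

instance : Fintype RB :=
  ⟨{RB.R, RB.B}, by intro x; cases x <;> simp⟩

section BPositions

variable {n : ℕ} (σ : Fin n → RB)

def Bfin : Finset ℕ :=
  (Finset.univ.filter (fun i : Fin n => σ i = RB.B)).image Fin.val

theorem coe_Bfin : (Bfin σ : Set ℕ) = Bpos σ := by
  ext i
  simp only [Bfin, Bpos, Finset.coe_image, Finset.coe_filter, Finset.mem_univ, true_and,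
    Set.mem_image, Set.mem_ofPred_eq]
  constructor
  · rintro ⟨j, hj, rfl⟩
    exact ⟨j.isLt, hj⟩
  · rintro ⟨hi, hB⟩
    exact ⟨⟨i, hi⟩, hB, rfl⟩

theorem hasB_iff_Bfin_nonempty : hasB σ ↔ (Bfin σ).Nonempty := by
  simp [hasB, Bfin, Finset.Nonempty]

theorem gap_eq_max'_sub_min' (h : (Bfin σ).Nonempty) :
    gap σ = (Bfin σ).max' h - (Bfin σ).min' h := by
  rw [gap, lastB, firstB, ← coe_Bfin, h.csSup_eq_max', h.csInf_eq_min']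

theorem valid_and_tau_eq_iff (k : ℕ) :
    (valid σ ∧ tau σ = k) ↔
      ∃ h : (Bfin σ).Nonempty, (Bfin σ).max' h - (Bfin σ).min' h ≤ 1 ∧
        (if Even n then 2 - ((Bfin σ).max' h - (Bfin σ).min' h)
          else (Bfin σ).max' h - (Bfin σ).min' h + 1) = k := by
  rw [valid, tau, hasB_iff_Bfin_nonempty]
  constructor
  · rintro ⟨⟨h, hgap⟩, htau⟩
    rw [gap_eq_max'_sub_min' σ h] at hgap htau
    exact ⟨h, hgap, htau⟩
  · rintro ⟨h, hgap, htau⟩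
    rw [← gap_eq_max'_sub_min' σ h] at hgap htau
    exact ⟨⟨h, hgap⟩, htau⟩

end BPositions

theorem card_valid_tau_eq_fintype_card (n k : ℕ) :
    Nat.card {σ : Fin n → RB // valid σ ∧ tau σ = k} =
      Fintype.card {σ : Fin n → RB // ∃ h : (Bfin σ).Nonempty,
        (Bfin σ).max' h - (Bfin σ).min' h ≤ 1 ∧
        (if Even n then 2 - ((Bfin σ).max' h - (Bfin σ).min' h)
          else (Bfin σ).max' h - (Bfin σ).min' h + 1) = k} := by
  rw [← Nat.card_eq_fintype_card]
  exact Nat.card_congr (Equiv.subtypeEquivRight fun σ => valid_and_tau_eq_iff σ k)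

theorem stmt13 :
    Nat.card {σ : Fin 4 → RB // valid σ ∧ tau σ = 1} = 3 ∧
    Nat.card {σ : Fin 4 → RB // valid σ ∧ tau σ = 2} = 4 ∧
    Nat.card {σ : Fin 4 → RB // valid σ ∧ tau σ = 3} = 0 ∧
    (Nat.card {σ : Fin 4 → RB // valid σ ∧ tau σ = 1},
     Nat.card {σ : Fin 4 → RB // valid σ ∧ tau σ = 2},
     Nat.card {σ : Fin 4 → RB // valid σ ∧ tau σ = 3}) ≠ (3, 12, 4) := by
  simp only [card_valid_tau_eq_fintype_card]
  decide
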